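/- arXiv:2009.14521 — 8 statements merged into one kernel-verified Lean document; each statement's English description precedes it below -/
import Mathlib

section
/- Let n ≥ 2, let λ > 0, and let a : Fin n → ℝ be a finite family of reals whose maximum is strictly positive. Let w > 0 be a real number satisfying w·exp(w) = exp(−1) (i.e., w = W(1/e), the Lambert W function evaluated at 1/e). Then (max_i a_i) − (∑_i a_i·exp(λ·a_i)) / (∑_i exp(λ·a_i)) ≤ w/λ + (n−2)/(λ·e). -/
/-!
For any indices `m ≠ j` (`a m` need not be the maximum) and `b i = λ a i`, the quantity
`λ (a m - softmax) · ∑ exp (b i)` equals `∑ (b m - b i) exp (b i)`, whose `m`-term vanishes.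
Every other term is at most `exp (b m) / e` because `x ≤ exp (x - 1)`; for the `j`-term the
same inequality at `x - w`, together with `w exp w = exp (-1)`, gives the sharper bound
`w (exp (b m) + exp (b j))`.
-/

open Finset Real

noncomputable def softmax {ι : Type*} [Fintype ι] (lam : ℝ) (a : ι → ℝ) : ℝ :=
  (∑ i, a i * exp (lam * a i)) / ∑ i, exp (lam * a i)

lemma sub_mul_exp_le_exp_sub_one (y z : ℝ) : (z - y) * exp y ≤ exp (z - 1) := by
  have h := add_one_le_exp (z - y - 1)
  calc (z - y) * exp y ≤ exp (z - y - 1) * exp y := by gcongr; linarith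
    _ = exp (z - 1) := by rw [← exp_add]; ring_nf

lemma pos_of_mul_exp_eq_exp_neg_one {w : ℝ} (hwe : w * exp w = exp (-1)) : 0 < w :=
  pos_of_mul_pos_left (hwe ▸ exp_pos (-1)) (exp_pos w).le

lemma sub_mul_exp_le_of_mul_exp_eq_exp_neg_one {w : ℝ} (hwe : w * exp w = exp (-1))
    (y z : ℝ) : (z - y) * exp y ≤ w * (exp z + exp y) := by
  have h := sub_mul_exp_le_exp_sub_one y (z - w)
  have hz : exp (z - w - 1) = w * exp z := by
    rw [show z - w - 1 = -1 + (z - w) by ring, exp_add, ← hwe, mul_assoc, ← exp_add]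
    ring_nf
  rw [hz] at h
  linarith

lemma sum_sub_mul_exp_le {ι : Type*} [Fintype ι] (b : ι → ℝ) {w : ℝ}
    (hwe : w * exp w = exp (-1)) {m j : ι} (hmj : m ≠ j) :
    ∑ i, (b m - b i) * exp (b i) ≤
      (w + (Fintype.card ι - 2) / exp 1) * ∑ i, exp (b i) := by
  classical
  set c : ℝ := (Fintype.card ι - 2) / exp 1
  have htwo : 2 ≤ Fintype.card ι := card_pair hmj ▸ card_le_univ {m, j}
  have hc : 0 ≤ c := div_nonneg (by norm_num [Nat.ofNat_le_cast.2 htwo]) (exp_pos 1).le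
  have hw := pos_of_mul_exp_eq_exp_neg_one hwe
  have hrest : ∑ i ∈ {m, j}ᶜ, (b m - b i) * exp (b i) ≤ c * exp (b m) := by
    calc ∑ i ∈ {m, j}ᶜ, (b m - b i) * exp (b i)
        ≤ ∑ i ∈ ({m, j} : Finset ι)ᶜ, exp (b m) / exp 1 := by
          gcongr with i
          rw [← exp_sub]
          exact sub_mul_exp_le_exp_sub_one _ _
      _ = c * exp (b m) := by
          rw [sum_const, card_compl, card_pair hmj, nsmul_eq_mul, Nat.cast_sub htwo]
          ring
  have hj := sub_mul_exp_le_of_mul_exp_eq_exp_neg_one hwe (b j) (b m)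
  have hR : 0 ≤ ∑ i ∈ ({m, j} : Finset ι)ᶜ, exp (b i) := by positivity
  rw [← sum_compl_add_sum {m, j}, ← sum_compl_add_sum {m, j} (fun i => exp (b i)),
    sum_pair hmj, sum_pair hmj, sub_self, zero_mul, zero_add]
  nlinarith [mul_nonneg hw.le hR, mul_nonneg hc hR, mul_nonneg hc (exp_pos (b j)).le]

theorem sub_softmax_le {ι : Type*} [Fintype ι] (a : ι → ℝ) {lam : ℝ} (hlam : 0 < lam)
    {w : ℝ} (hwe : w * exp w = exp (-1)) {m j : ι} (hmj : m ≠ j) :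
    a m - softmax lam a ≤ w / lam + (Fintype.card ι - 2) / (lam * exp 1) := by
  have hE : 0 < ∑ i, exp (lam * a i) := sum_pos (fun i _ => exp_pos _) ⟨m, mem_univ m⟩
  have hgap : lam * (a m - softmax lam a) =
      (∑ i, (lam * a m - lam * a i) * exp (lam * a i)) / ∑ i, exp (lam * a i) := by
    rw [softmax, eq_div_iff hE.ne']
    simp only [sub_mul, sum_sub_distrib, ← mul_sum, mul_assoc]
    field_simp
  have key := sum_sub_mul_exp_le (fun i => lam * a i) hwe hmj
  rw [← div_le_iff₀ hE, ← hgap, ← le_div_iff₀' hlam] at key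
  rwa [add_div, div_div, mul_comm (exp 1)] at key

theorem max_sub_softmax_le_general (n : ℕ) (lam : ℝ) (hlam : 0 < lam)
    (a : Fin (n + 2) → ℝ)
    (w : ℝ) (hwe : w * Real.exp w = Real.exp (-1)) :
    Finset.univ.sup' Finset.univ_nonempty a -
        (∑ i, a i * Real.exp (lam * a i)) / (∑ i, Real.exp (lam * a i)) ≤
      w / lam + (((n + 2 : ℕ) : ℝ) - 2) / (lam * Real.exp 1) := by
  obtain ⟨m, -, hm⟩ := exists_mem_eq_sup' univ_nonempty a
  obtain ⟨j, hjm⟩ := Fintype.exists_ne_of_one_lt_card (by simp) m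
  rw [hm]
  simpa only [Fintype.card_fin, softmax] using sub_softmax_le a hlam hwe hjm.symm

/-- Key lemma: the gap between the maximum and the logit softmax of `n ≥ 2`
(here `n + 2`) real utilities with strictly positive maximum is bounded by
`W(1/e)/λ + (n-2)/(λ e)`. -/
theorem max_sub_softmax_le (n : ℕ) (lam : ℝ) (hlam : 0 < lam)
    (a : Fin (n + 2) → ℝ)
    (hmax : 0 < Finset.univ.sup' Finset.univ_nonempty a)
    (w : ℝ) (hw : 0 < w) (hwe : w * Real.exp w = Real.exp (-1)) :
    Finset.univ.sup' Finset.univ_nonempty a -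
        (∑ i, a i * Real.exp (lam * a i)) / (∑ i, Real.exp (lam * a i)) ≤
      w / lam + (((n + 2 : ℕ) : ℝ) - 2) / (lam * Real.exp 1) :=
  max_sub_softmax_le_general n lam hlam a w hwe
end

section
/- Let a, b, λ, w be real numbers with b ≤ a, a > 0, λ > 0, and w > 0 satisfying w·exp(w) = exp(−1). Then a − (a·exp(λ·a) + b·exp(λ·b)) / (exp(λ·a) + exp(λ·b)) ≤ w/λ. -/
/-!
The gap equals `d / (exp (λ d) + 1)` with `d = a - b`, so it suffices that
`t ≤ w (exp t + 1)` for every real `t`. Since `w = exp (-w - 1)`, we have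
`w exp t = exp (t - w - 1) ≥ t - w`, the tangent-line bound for `exp`.
-/

open Real

lemma eq_exp_neg_sub_one_of_mul_exp_eq {w : ℝ} (hwe : w * exp w = exp (-1)) :
    w = exp (-w - 1) := by
  calc w = exp (-1) / exp w := eq_div_of_mul_eq (exp_ne_zero w) hwe
    _ = exp (-w - 1) := by rw [← exp_sub]; ring_nf

lemma le_mul_exp_add_one {w : ℝ} (hwe : w * exp w = exp (-1)) (t : ℝ) :
    t ≤ w * (exp t + 1) := by
  have hexp : w * exp t = exp (t - w - 1) := by
    conv_lhs => rw [eq_exp_neg_sub_one_of_mul_exp_eq hwe, ← exp_add]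
    ring_nf
  have := add_one_le_exp (t - w - 1)
  linarith

lemma sub_softmax_pair_eq (a b lam : ℝ) :
    a - (a * exp (lam * a) + b * exp (lam * b)) / (exp (lam * a) + exp (lam * b)) =
      (a - b) / (exp (lam * (a - b)) + 1) := by
  have hsplit : exp (lam * a) = exp (lam * (a - b)) * exp (lam * b) := by
    rw [← exp_add]; ring_nf
  rw [hsplit, ← add_one_mul, ← mul_assoc, ← add_mul, mul_div_mul_right _ _ (exp_ne_zero _)]
  field_simp
  ring

theorem max_sub_softmax_pair_le_general (a b lam w : ℝ)
    (hlam : 0 < lam) (hwe : w * Real.exp w = Real.exp (-1)) :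
    a - (a * Real.exp (lam * a) + b * Real.exp (lam * b)) /
        (Real.exp (lam * a) + Real.exp (lam * b)) ≤ w / lam := by
  rw [sub_softmax_pair_eq, div_le_div_iff₀ (by positivity) hlam]
  simpa [mul_comm] using le_mul_exp_add_one hwe (lam * (a - b))

/-- Two-action base case: the gap between the maximum `a` and the logit softmax
of the pair `(a, b)` (with `b ≤ a`, `a > 0`) is at most `W(1/e)/λ`. -/
theorem max_sub_softmax_pair_le (a b lam w : ℝ) (hba : b ≤ a) (ha : 0 < a)
    (hlam : 0 < lam) (hw : 0 < w) (hwe : w * Real.exp w = Real.exp (-1)) :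
    a - (a * Real.exp (lam * a) + b * Real.exp (lam * b)) /
        (Real.exp (lam * a) + Real.exp (lam * b)) ≤ w / lam :=
  max_sub_softmax_pair_le_general a b lam w hlam hwe
end

section
/- Let a > 0 and λ > 0 be reals, and let w > 0 satisfy w·exp(w) = exp(−1). Define d : ℝ → ℝ by d(x) = a − (a·exp(λ·a) + a·x·exp(λ·a·x)) / (exp(λ·a) + exp(λ·a·x)). Then for every x ≤ 1 one has d(x) ≤ w/λ, and equality holds exactly at x = (a·λ − w − 1)/(a·λ), i.e., d attains its maximum value w/λ on (−∞, 1] uniquely at the point r = 1 − (w + 1)/(a·λ). -/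
/-!
Writing `t = λa(1 - x)`, the gap is `d(x) = g(t)/λ` with `g(t) = t / (exp t + 1)`, so everything
reduces to maximising `g` over `ℝ`. The defining equation of `w` says `exp (-(w + 1)) = w`, hence
`w · exp t = exp (t - (w + 1)) ≥ t - w`, i.e. `g(t) ≤ w`, with equality exactly when
`t - (w + 1) = 0` since `exp s = s + 1` only at `s = 0`.
-/

open Real

theorem sub_softmax_pair_eq_s3 {c : ℝ} (hc : c ≠ 0) (u v : ℝ) :
    u - (u * exp (c * u) + v * exp (c * v)) / (exp (c * u) + exp (c * v)) =
      c * (u - v) / (exp (c * (u - v)) + 1) / c := by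
  have hsplit : exp (c * u) = exp (c * (u - v)) * exp (c * v) := by
    rw [← exp_add]; ring_nf
  rw [hsplit]
  field_simp
  ring

theorem exp_neg_add_one_of_mul_exp_eq {w : ℝ} (hwe : w * exp w = exp (-1)) :
    exp (-(w + 1)) = w := by
  rw [show -(w + 1) = -1 - w by ring, exp_sub, ← hwe]
  field_simp

theorem mul_exp_eq_exp_sub_of_mul_exp_eq {w : ℝ} (hwe : w * exp w = exp (-1)) (t : ℝ) :
    w * exp t = exp (t - (w + 1)) := by
  rw [sub_eq_add_neg, exp_add, exp_neg_add_one_of_mul_exp_eq hwe, mul_comm]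

theorem div_exp_add_one_le_of_mul_exp_eq {w : ℝ} (hwe : w * exp w = exp (-1)) (t : ℝ) :
    t / (exp t + 1) ≤ w := by
  rw [div_le_iff₀ (by positivity), mul_add, mul_one, mul_exp_eq_exp_sub_of_mul_exp_eq hwe]
  linarith [add_one_le_exp (t - (w + 1))]

theorem div_exp_add_one_eq_iff_of_mul_exp_eq {w : ℝ} (hwe : w * exp w = exp (-1)) (t : ℝ) :
    t / (exp t + 1) = w ↔ t = w + 1 := by
  rw [div_eq_iff (by positivity), mul_add, mul_one, mul_exp_eq_exp_sub_of_mul_exp_eq hwe]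
  constructor
  · intro heq
    by_contra hne
    linarith [add_one_lt_exp (sub_ne_zero.mpr hne)]
  · intro heq
    rw [heq, sub_self, exp_zero]
    ring

theorem two_action_gap_max_general (a lam w : ℝ) (ha : 0 < a) (hlam : 0 < lam)
    (hwe : w * Real.exp w = Real.exp (-1))
    (d : ℝ → ℝ)
    (hd : ∀ x, d x = a - (a * Real.exp (lam * a) + a * x * Real.exp (lam * a * x)) /
        (Real.exp (lam * a) + Real.exp (lam * a * x))) :
    ∀ x ≤ (1 : ℝ), d x ≤ w / lam ∧ (d x = w / lam ↔ x = (a * lam - w - 1) / (a * lam)) := by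
  intro x _
  have hdx : d x = lam * (a - a * x) / (exp (lam * (a - a * x)) + 1) / lam := by
    rw [hd x, ← sub_softmax_pair_eq_s3 hlam.ne' a (a * x)]
    simp only [mul_assoc]
  have hpoint : lam * (a - a * x) = w + 1 ↔ x = (a * lam - w - 1) / (a * lam) := by
    rw [eq_div_iff (by positivity)]
    constructor <;> intro h <;> linarith
  rw [hdx, div_le_div_iff_of_pos_right hlam, div_left_inj' hlam.ne',
    div_exp_add_one_eq_iff_of_mul_exp_eq hwe, hpoint]
  exact ⟨div_exp_add_one_le_of_mul_exp_eq hwe _, Iff.rfl⟩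

/-- The two-action max–softmax gap `d(x)` is at most `w/λ` for `x ≤ 1`, with
equality exactly at `x = (aλ - w - 1)/(aλ)`, where `w = W(1/e)`. -/
theorem two_action_gap_max (a lam w : ℝ) (ha : 0 < a) (hlam : 0 < lam)
    (hw : 0 < w) (hwe : w * Real.exp w = Real.exp (-1))
    (d : ℝ → ℝ)
    (hd : ∀ x, d x = a - (a * Real.exp (lam * a) + a * x * Real.exp (lam * a * x)) /
        (Real.exp (lam * a) + Real.exp (lam * a * x))) :
    ∀ x ≤ (1 : ℝ), d x ≤ w / lam ∧ (d x = w / lam ↔ x = (a * lam - w - 1) / (a * lam)) :=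
  two_action_gap_max_general a lam w ha hlam hwe d hd
end

section
/- Let q : ℝ → ℝ be strictly monotonically increasing with q(x) > 0 for all x, and let a, b, c be reals with a < b < c. Then (−b)·q(−c)/(q(−c) + q(−a)) + (−a)·q(−a)/(q(−c) + q(−a)) > (−b)·q(−b)/(q(−b) + q(−a)) + (−a)·q(−a)/(q(−b) + q(−a)). Consequently, in the 2×2 zero-sum game with leader payoff matrix [[b, a], [c, a]] (follower payoffs are the negatives), the follower's expected utility when the leader plays the first row against the canonical quantal response to the second row strictly exceeds the follower's expected utility when the leader plays the first row against the canonical quantal response to the first row; hence the canonical quantal response with generator q is not a pretty-good-response. -/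
/-! The follower's payoff `-b` from her first action is below her payoff `-a` from her second
action, so against the leader's first row she gains by weighting her first action less. The
quantal response to the second row weights it by `q(-c)`, the response to the first row by
`q(-b) > q(-c)`; the response to the second row is therefore strictly better. -/

theorem weighted_mean_lt_of_weight_lt {x y r w w' : ℝ} (hxy : x < y) (hr : 0 < r) (hw : 0 < w)
    (hww' : w < w') :
    w' / (w' + r) * x + r / (w' + r) * y < w / (w + r) * x + r / (w + r) * y := by
  have hS : 0 < w + r := by positivity
  have hS' : 0 < w' + r := by linarith
  rw [div_mul_eq_mul_div, div_mul_eq_mul_div, ← add_div, div_mul_eq_mul_div,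
    div_mul_eq_mul_div, ← add_div, div_lt_div_iff₀ hS' hS]
  nlinarith [mul_pos hr (mul_pos (sub_pos.2 hww') (sub_pos.2 hxy))]

/-- `u2 p p'` is the follower's expected utility when the leader plays the first row with
probability `p` and the follower plays the canonical quantal response to the leader strategy
with probability `p'`. -/
theorem canonical_qr_not_pretty_good_response
    (q : ℝ → ℝ) (hq : StrictMono q) (hqpos : ∀ x, 0 < q x)
    (a b c : ℝ) (hab : a < b) (hbc : b < c)
    (vA : ℝ → ℝ) (hvA : ∀ p, vA p = -(p * b + (1 - p) * c))
    (u2 : ℝ → ℝ → ℝ)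
    (hu2 : ∀ p p', u2 p p' =
      (q (vA p') / (q (vA p') + q (-a))) * vA p +
        (q (-a) / (q (vA p') + q (-a))) * (-a)) :
    ((-b) * q (-c) / (q (-c) + q (-a)) + (-a) * q (-a) / (q (-c) + q (-a)) >
        (-b) * q (-b) / (q (-b) + q (-a)) + (-a) * q (-a) / (q (-b) + q (-a))) ∧
      ¬ (∀ p ∈ Set.Icc (0 : ℝ) 1, ∀ p' ∈ Set.Icc (0 : ℝ) 1, u2 p p' ≤ u2 p p) := by
  have key := weighted_mean_lt_of_weight_lt (neg_lt_neg hab) (hqpos (-a)) (hqpos (-c))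
    (hq (neg_lt_neg hbc))
  refine ⟨by convert key using 1 <;> ring, fun hpgr => ?_⟩
  have hv1 : vA 1 = -b := by rw [hvA]; ring
  have hv0 : vA 0 = -c := by rw [hvA]; ring
  have h := hpgr 1 ⟨zero_le_one, le_rfl⟩ 0 ⟨le_rfl, zero_le_one⟩
  rw [hu2, hu2, hv1, hv0] at h
  linarith
end

section
/- Let n ≥ 1, let x : Fin n → ℝ satisfy x_i > 0 for all i, let σ : Fin n → ℝ satisfy 0 ≤ σ_i ≤ 1 for all i, and let q : ℝ → ℝ be strictly monotone increasing with q(y) > 0 for all y. Set A = ∑_i x_i·σ_i, B = ∑_i x_i·(1 − σ_i), and S = ∑_i x_i. Then (1/(2n)) · (A·q(−A/(2n)) + B·q(−B/(2n))) / (q(−A/(2n)) + q(−B/(2n))) = S/(4n) if and only if A = B. -/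
/-!
Write `a = q(-A/(2n))` and `b = q(-B/(2n))`. Since `S = A + B`, the left-hand side differs
from `S/(4n)` by `(A - B)(a - b) / (4n(a + b))`, and `a + b > 0`. As `y ↦ q(-y/(2n))` is injective,
`a = b` forces `A = B`, so the difference vanishes exactly when `A = B`.
-/

open Finset

theorem sum_mul_add_sum_mul_one_sub {ι R : Type*} [CommRing R] (s : Finset ι) (x σ : ι → R) :
    ∑ i ∈ s, x i * σ i + ∑ i ∈ s, x i * (1 - σ i) = ∑ i ∈ s, x i := by
  rw [← sum_add_distrib]
  exact sum_congr rfl fun i _ ↦ by ring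

section WeightedAverage

variable {K : Type*} [Field K] [CharZero K] {A B a b : K}

theorem weighted_avg_sub_avg (hab : a + b ≠ 0) :
    (A * a + B * b) / (a + b) - (A + B) / 2 = (A - B) * (a - b) / (2 * (a + b)) := by
  field_simp
  ring

theorem weighted_avg_eq_avg_iff (hab : a + b ≠ 0) :
    (A * a + B * b) / (a + b) = (A + B) / 2 ↔ (A - B) * (a - b) = 0 := by
  rw [← sub_eq_zero, weighted_avg_sub_avg hab, div_eq_zero_iff,
    or_iff_left (mul_ne_zero two_ne_zero hab)]

end WeightedAverage

theorem Function.Injective.sub_mul_sub_eq_zero_iff {R : Type*} [Ring R] [NoZeroDivisors R]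
    {f : R → R} (hf : Function.Injective f) {A B : R} : (A - B) * (f A - f B) = 0 ↔ A = B := by
  rw [mul_eq_zero, sub_eq_zero, sub_eq_zero, hf.eq_iff, or_self]

theorem partition_subtree_eq_iff_general (n : ℕ) (hn : 1 ≤ n)
    (x σ : Fin n → ℝ)
    (q : ℝ → ℝ) (hq : StrictMono q) (hqpos : ∀ y, 0 < q y)
    (A B S : ℝ)
    (hA : A = ∑ i, x i * σ i) (hB : B = ∑ i, x i * (1 - σ i))
    (hS : S = ∑ i, x i) :
    (1 / (2 * (n : ℝ))) *
        ((A * q (-(A / (2 * (n : ℝ)))) + B * q (-(B / (2 * (n : ℝ))))) /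
          (q (-(A / (2 * (n : ℝ)))) + q (-(B / (2 * (n : ℝ)))))) =
      S / (4 * (n : ℝ)) ↔ A = B := by
  have hn₀ : (2 * (n : ℝ)) ≠ 0 := by
    have : (1 : ℝ) ≤ n := by exact_mod_cast hn
    positivity
  have hSAB : S = A + B := by rw [hS, hA, hB, sum_mul_add_sum_mul_one_sub]
  set f : ℝ → ℝ := fun y ↦ q (-(y / (2 * (n : ℝ))))
  have hf : Function.Injective f := fun y z h ↦ by
    simpa [hn₀] using hq.injective h
  have hpos : f A + f B ≠ 0 := (add_pos (hqpos _) (hqpos _)).ne'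
  calc 1 / (2 * (n : ℝ)) * ((A * f A + B * f B) / (f A + f B)) = S / (4 * n)
      ↔ (A * f A + B * f B) / (f A + f B) = (A + B) / 2 := by
        rw [hSAB, show (A + B) / (4 * n) = (A + B) / 2 / (2 * n) by ring, one_div_mul_eq_div,
          div_left_inj' hn₀]
    _ ↔ A = B := by rw [weighted_avg_eq_avg_iff hpos, hf.sub_mul_sub_eq_zero_iff]

/-- Equality characterization in the partition subtrees: with a strictly
increasing positive generator `q`, the leader's expected utility equals the
maximum `S/(4n)` exactly when the two subset sums `A` and `B` coincide. -/
theorem partition_subtree_eq_iff (n : ℕ) (hn : 1 ≤ n)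
    (x σ : Fin n → ℝ) (hx : ∀ i, 0 < x i)
    (hσ : ∀ i, 0 ≤ σ i ∧ σ i ≤ 1)
    (q : ℝ → ℝ) (hq : StrictMono q) (hqpos : ∀ y, 0 < q y)
    (A B S : ℝ)
    (hA : A = ∑ i, x i * σ i) (hB : B = ∑ i, x i * (1 - σ i))
    (hS : S = ∑ i, x i) :
    (1 / (2 * (n : ℝ))) *
        ((A * q (-(A / (2 * (n : ℝ)))) + B * q (-(B / (2 * (n : ℝ))))) /
          (q (-(A / (2 * (n : ℝ)))) + q (-(B / (2 * (n : ℝ)))))) =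
      S / (4 * (n : ℝ)) ↔ A = B :=
  partition_subtree_eq_iff_general n hn x σ q hq hqpos A B S hA hB hS
end

section
/- Let n ≥ 1 and let a : Fin n → ℝ. Then the logit softmax value tends to the maximum as the rationality parameter grows: the function λ ↦ (∑_i a_i·exp(λ·a_i)) / (∑_i exp(λ·a_i)) tends to max_i a_i as λ → ∞. -/
open Filter Topology Finset Real

/-! Dividing numerator and denominator by `exp (λ M)`, where `M = max a`, turns the weights into
`exp (λ (a i - M))`, which tend to `1` at the maximizers and to `0` elsewhere. The softmax value
therefore tends to the average of `a` over the maximizers, which is `M`. -/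

theorem tendsto_exp_mul_atTop_of_nonpos {x : ℝ} (hx : x ≤ 0) :
    Tendsto (fun t : ℝ => exp (t * x)) atTop (𝓝 (if x = 0 then 1 else 0)) := by
  rcases hx.eq_or_lt with rfl | hneg
  · simp
  · rw [if_neg hneg.ne]
    exact tendsto_exp_atBot.comp (tendsto_id.atTop_mul_const_of_neg hneg)

section

variable {ι : Type*} [Fintype ι]

theorem softmax_eq_of_shift (a : ι → ℝ) (t c : ℝ) :
    (∑ i, a i * exp (t * a i)) / (∑ i, exp (t * a i))
      = (∑ i, a i * exp (t * (a i - c))) / (∑ i, exp (t * (a i - c))) := by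
  have hsplit : ∀ i, exp (t * a i) = exp (t * c) * exp (t * (a i - c)) := fun i => by
    rw [← exp_add]; ring_nf
  simp_rw [hsplit, mul_left_comm (a _), ← mul_sum]
  exact mul_div_mul_left _ _ (exp_ne_zero _)

theorem tendsto_softmax_atTop [Nonempty ι] (a : ι → ℝ) :
    Tendsto (fun t : ℝ => (∑ i, a i * exp (t * a i)) / (∑ i, exp (t * a i))) atTop
      (𝓝 (univ.sup' univ_nonempty a)) := by
  obtain ⟨i₀, -, hi₀⟩ := exists_mem_eq_sup' univ_nonempty a
  set M := univ.sup' univ_nonempty a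
  let w : ι → ℝ := fun i => if a i - M = 0 then 1 else 0
  have hweight : ∀ i, Tendsto (fun t : ℝ => exp (t * (a i - M))) atTop (𝓝 (w i)) := fun i =>
    tendsto_exp_mul_atTop_of_nonpos (sub_nonpos.2 (le_sup' a (mem_univ i)))
  have hnum : ∑ i, a i * w i = M * ∑ i, w i := by
    rw [mul_sum]
    refine sum_congr rfl fun i _ => ?_
    by_cases h : a i = M <;> simp [w, sub_eq_zero, h]
  have hden : 0 < ∑ i, w i := by
    refine lt_of_lt_of_le ?_ (single_le_sum (fun i _ => ?_) (mem_univ i₀))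
    · simp [w, ← hi₀]
    · dsimp only [w]; split_ifs <;> norm_num
  have hlim := (tendsto_finsetSum univ fun i _ => (hweight i).const_mul (a i)).div
    (tendsto_finsetSum univ fun i _ => hweight i) hden.ne'
  rw [hnum, mul_div_cancel_right₀ _ hden.ne'] at hlim
  exact hlim.congr fun t => (softmax_eq_of_shift a t M).symm

end

/-- The logit softmax value tends to the maximum as the rationality parameter
`λ` tends to infinity. -/
theorem softmax_tendsto_max (n : ℕ) (a : Fin (n + 1) → ℝ) :
    Filter.Tendsto
      (fun lam : ℝ =>
        (∑ i, a i * Real.exp (lam * a i)) / (∑ i, Real.exp (lam * a i)))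
      Filter.atTop
      (nhds (Finset.univ.sup' Finset.univ_nonempty a)) :=
  tendsto_softmax_atTop a
end

section
/- Let q : ℝ → ℝ be strictly monotonically increasing with q(x) > 0 for all x. For p ∈ [0,1] define U(p) = (p·q(p) + (1−p)·q(1−p)) / (q(p) + q(1−p)). Then U(1/2) = 1/2 and U(p) > 1/2 for every p ∈ [0,1] with p ≠ 1/2; that is, in the 2×2 common-payoff coordination game with payoff matrix [[1,0],[0,1]], the uniform leader strategy is the strict global minimum of the leader's expected utility against any canonical quantal response with strictly increasing positive generator. -/
/-! `U p - 1/2` factors as `(p - (1 - p)) * (q p - q (1 - p)) / (2 * (q p + q (1 - p)))`.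
The denominator is positive, and since `q` is strictly increasing the two factors of the
numerator have the same sign, vanishing exactly at `p = 1/2`. -/

theorem StrictMono.sub_mul_sub_pos {R : Type*} [Ring R] [LinearOrder R] [IsStrictOrderedRing R]
    {f : R → R} (hf : StrictMono f) {x y : R} (hxy : x ≠ y) :
    0 < (x - y) * (f x - f y) := by
  rcases hxy.lt_or_gt with hlt | hgt
  · exact mul_pos_of_neg_of_neg (sub_neg.2 hlt) (sub_neg.2 (hf hlt))
  · exact mul_pos (sub_pos.2 hgt) (sub_pos.2 (hf hgt))

theorem weighted_average_sub_half {K : Type*} [Field K] [NeZero (2 : K)] (p a b : K) (hab : a + b ≠ 0) :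
    (p * a + (1 - p) * b) / (a + b) - 1 / 2 = (p - (1 - p)) * (a - b) / (2 * (a + b)) := by
  field_simp
  ring

/-- In the 2×2 common-payoff coordination game, against any canonical quantal
response with strictly increasing positive generator `q`, the uniform leader
strategy is the strict global minimum of the leader's expected utility:
`U(1/2) = 1/2` and `U(p) > 1/2` for all `p ∈ [0,1]`, `p ≠ 1/2`. -/
theorem coordination_uniform_strict_min (q : ℝ → ℝ) (hq : StrictMono q)
    (hqpos : ∀ x, 0 < q x)
    (U : ℝ → ℝ)
    (hU : ∀ p, U p = (p * q p + (1 - p) * q (1 - p)) / (q p + q (1 - p))) :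
    U (1 / 2) = 1 / 2 ∧
      ∀ p ∈ Set.Icc (0 : ℝ) 1, p ≠ 1 / 2 → 1 / 2 < U p := by
  have hden : ∀ p, 0 < q p + q (1 - p) := fun p => add_pos (hqpos p) (hqpos (1 - p))
  have hU_sub : ∀ p, U p - 1 / 2 = (p - (1 - p)) * (q p - q (1 - p)) / (2 * (q p + q (1 - p))) :=
    fun p => (hU p).symm ▸ weighted_average_sub_half p _ _ (hden p).ne'
  refine ⟨?_, fun p _ hp => ?_⟩
  · have := hU_sub (1 / 2)
    norm_num at this
    linarith
  · have hp' : p ≠ 1 - p := fun h => hp (by linarith)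
    have := hU_sub p ▸ div_pos (hq.sub_mul_sub_pos hp') (mul_pos two_pos (hden p))
    linarith
end

section
/- For p ∈ [0,1] define G(p) = (10p·exp(−10p) + 10(1−p)·exp(−10(1−p))) / (1 + exp(−10p) + exp(−10(1−p))). Then (i) G(p) = G(1−p) for all p ∈ [0,1], and (ii) G(4/5) > G(1/2). Consequently, in the zero-sum game with leader payoff matrix [[0,10,0],[0,0,10]] against a logit quantal responder with λ = 1, the uniform strategy is not a maximizer of the leader's expected utility, and the maximizers come in symmetric pairs p*, 1−p* with p* ≠ 1/2; the game has two distinct Quantal Stackelberg Equilibria, both different from uniform. -/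
/-!
`G` is invariant under `p ↦ 1 - p`, so the maximizers of the continuous `G` on `[0, 1]` come in
pairs `p, 1 - p`, and such a pair collapses only at the fixed point `1 / 2`, which `4 / 5` beats.
In `x = e⁻¹` the comparison `G (1 / 2) < G (4 / 5)` is a polynomial inequality that already holds
for `0 < x ≤ 1 / 2`, i.e. it only needs `e ≥ 2`.
-/

open Real Set

noncomputable def gadgetValue (a p : ℝ) : ℝ :=
  (a * p * exp (-(a * p)) + a * (1 - p) * exp (-(a * (1 - p)))) /
    (1 + exp (-(a * p)) + exp (-(a * (1 - p))))

theorem gadgetValue_one_sub (a p : ℝ) : gadgetValue a (1 - p) = gadgetValue a p := by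
  unfold gadgetValue
  ring_nf

theorem continuous_gadgetValue (a : ℝ) : Continuous (gadgetValue a) :=
  Continuous.div (by fun_prop) (by fun_prop) fun _ => by positivity

/-- `gadgetValue 10 (1 / 2) < gadgetValue 10 (4 / 5)` with `exp (-1)` replaced by `x`. -/
theorem gadget_comparison_of_le_half {x : ℝ} (hx₀ : 0 < x) (hx : x ≤ 1 / 2) :
    10 * x ^ 5 / (1 + 2 * x ^ 5) < (8 * x ^ 8 + 2 * x ^ 2) / (1 + x ^ 8 + x ^ 2) := by
  rw [div_lt_div_iff₀ (by positivity) (by positivity)]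
  have h3 : x ^ 3 ≤ (1 / 2) ^ 3 := by gcongr
  have h5 : x ^ 5 ≤ (1 / 2) ^ 5 := by gcongr
  have hx2 : 0 < x ^ 2 := by positivity
  nlinarith [mul_le_mul_of_nonneg_left h3 hx2.le, mul_le_mul_of_nonneg_left h5 hx2.le,
    pow_pos hx₀ 8, pow_pos hx₀ 13]

theorem gadgetValue_ten_half_lt : gadgetValue 10 (1 / 2) < gadgetValue 10 (4 / 5) := by
  have hx : exp (-1) ≤ 1 / 2 := by
    rw [exp_neg, inv_le_comm₀ (exp_pos 1) (by norm_num)]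
    linarith [add_one_lt_exp one_ne_zero]
  have := gadget_comparison_of_le_half (exp_pos (-1)) hx
  simp only [← exp_nat_mul] at this
  unfold gadgetValue
  norm_num at this ⊢
  convert this using 2 <;> ring

section InvariantMaximizers

variable {α : Type*} {f : α → ℝ} {s : Set α} {σ : α → α} {p : α}

theorem IsMaxOn.ne_of_lt_apply {c q : α} (hp : IsMaxOn f s p) (hq : q ∈ s) (hc : f c < f q) :
    p ≠ c := by
  rintro rfl
  exact (hp hq).not_gt hc

theorem IsMaxOn.apply_of_invariant (hp : IsMaxOn f s p) (hfσ : ∀ x, f (σ x) = f x) :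
    IsMaxOn f s (σ p) := by
  rwa [isMaxOn_iff, hfσ]

theorem IsCompact.exists_ne_isMaxOn_of_invariant [TopologicalSpace α] (hs : IsCompact s)
    (hne : s.Nonempty) (hf : ContinuousOn f s) (hσs : MapsTo σ s s) (hfσ : ∀ x, f (σ x) = f x)
    (hfix : ∀ x ∈ s, σ x = x → ∃ y ∈ s, f x < f y) :
    ∃ x ∈ s, ∃ y ∈ s, x ≠ y ∧ IsMaxOn f s x ∧ IsMaxOn f s y := by
  obtain ⟨p, hps, hp⟩ := hs.exists_isMaxOn hne hf
  refine ⟨p, hps, σ p, hσs hps, fun h => ?_, hp, hp.apply_of_invariant hfσ⟩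
  obtain ⟨y, hys, hy⟩ := hfix p hps h.symm
  exact hp.ne_of_lt_apply hys hy rfl

end InvariantMaximizers

/-- Zero-sum gadget `[[0,10,0],[0,0,10]]` against a logit quantal responder
(λ = 1): the leader's value `G` is symmetric around `1/2`, satisfies
`G(4/5) > G(1/2)`, every maximizer `p*` on `[0,1]` is different from `1/2`
and comes with the symmetric maximizer `1 - p*`, and there exist two distinct
maximizers (two distinct Quantal Stackelberg Equilibria). -/
theorem zero_sum_gadget_two_qse (G : ℝ → ℝ)
    (hG : ∀ p, G p =
      (10 * p * Real.exp (-(10 * p)) + 10 * (1 - p) * Real.exp (-(10 * (1 - p)))) /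
        (1 + Real.exp (-(10 * p)) + Real.exp (-(10 * (1 - p))))) :
    (∀ p ∈ Set.Icc (0 : ℝ) 1, G p = G (1 - p)) ∧
      G (4 / 5) > G (1 / 2) ∧
      (∀ p ∈ Set.Icc (0 : ℝ) 1, (∀ p' ∈ Set.Icc (0 : ℝ) 1, G p' ≤ G p) →
        p ≠ 1 / 2 ∧ ∀ p' ∈ Set.Icc (0 : ℝ) 1, G p' ≤ G (1 - p)) ∧
      ∃ p₁ ∈ Set.Icc (0 : ℝ) 1, ∃ p₂ ∈ Set.Icc (0 : ℝ) 1, p₁ ≠ p₂ ∧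
        (∀ p' ∈ Set.Icc (0 : ℝ) 1, G p' ≤ G p₁) ∧
        (∀ p' ∈ Set.Icc (0 : ℝ) 1, G p' ≤ G p₂) := by
  obtain rfl : G = gadgetValue 10 := funext hG
  have hsymm : ∀ p, gadgetValue 10 (1 - p) = gadgetValue 10 p := gadgetValue_one_sub 10
  have hmem : (4 / 5 : ℝ) ∈ Icc 0 1 := by norm_num
  refine ⟨fun p _ => (hsymm p).symm, gadgetValue_ten_half_lt, fun p _ hp =>
    ⟨IsMaxOn.ne_of_lt_apply hp hmem gadgetValue_ten_half_lt,
      IsMaxOn.apply_of_invariant (σ := fun p => 1 - p) hp hsymm⟩, ?_⟩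
  refine isCompact_Icc.exists_ne_isMaxOn_of_invariant (nonempty_Icc.2 zero_le_one)
    (continuous_gadgetValue 10).continuousOn (fun p hp => ⟨?_, ?_⟩) hsymm fun p _ hp => ?_
  · linarith [hp.2]
  · linarith [hp.1]
  · obtain rfl : p = 1 / 2 := by linarith
    exact ⟨4 / 5, hmem, gadgetValue_ten_half_lt⟩
end
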